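/- Let θ : T → ℝ, let p_θ be the associated hierarchical probability function, let s : T → ℝ and α ∈ ℝ. Define the induced hyperparameters α(D, i_D) = Σ_{F∈𝒟, F⊇D} Σ_{j_F∈I_F* : (j_F)_D = i_D} (−1)^{|F∖D|} s(F, j_F) for (D, i_D) ∈ T, and α_∅ = α + Σ_{(D,i_D)∈T} (−1)^{|D|} s(D, i_D). Then the conjugate-prior kernel rewrites in terms of cell probabilities: exp( Σ_{(D,i_D)∈T} θ(D, i_D) s(D, i_D) ) · p_θ(i*)^α = ( ∏_{(D,i_D)∈T} p_θ(i_D, i*_{D^c})^{α(D,i_D)} ) · p_θ(i*)^{α_∅}. -/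

import Mathlib

open Finset MeasureTheory

/-- The cell equal to `i` on `F` and to the baseline `b` off `F`. -/
def cellOn {V : Type} [DecidableEq V] {I : V → Type} (b : ∀ γ, I γ)
    (F : Finset V) (i : ∀ γ, I γ) : ∀ γ, I γ :=
  fun γ => if γ ∈ F then i γ else b γ

/-- The support of a cell: the set of coordinates that are off baseline. -/
def cellSupport {V : Type} [Fintype V] [DecidableEq V] {I : V → Type}
    [∀ γ, DecidableEq (I γ)] (b : ∀ γ, I γ) (j : ∀ γ, I γ) : Finset V :=
  Finset.univ.filter (fun γ => j γ ≠ b γ)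

/-- A generating class: a nonempty collection of nonempty subsets of `V` closed
under nonempty subsets. -/
def IsGenClass {V : Type} [DecidableEq V] (𝒟 : Finset (Finset V)) : Prop :=
  𝒟.Nonempty ∧ (∀ D ∈ 𝒟, D ≠ ∅) ∧ ∀ D ∈ 𝒟, ∀ F ⊆ D, F ≠ ∅ → F ∈ 𝒟

/-- The index set `T = {(D, i_D) : D ∈ 𝒟, i_D ∈ I_D*}`; a tuple `i_D ∈ I_D*` is
represented by the unique cell whose support is exactly `D`. -/
def TParam {V : Type} [Fintype V] [DecidableEq V] (I : V → Type)
    [∀ γ, DecidableEq (I γ)] (b : ∀ γ, I γ) (𝒟 : Finset (Finset V)) : Type :=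
  {x : Finset V × (∀ γ, I γ) // x.1 ∈ 𝒟 ∧ cellSupport b x.2 = x.1}

noncomputable instance {V : Type} [Fintype V] [DecidableEq V] (I : V → Type)
    [∀ γ, Fintype (I γ)] [∀ γ, DecidableEq (I γ)] (b : ∀ γ, I γ)
    (𝒟 : Finset (Finset V)) : Fintype (TParam I b 𝒟) := by
  unfold TParam; infer_instance

instance {V : Type} [Fintype V] [DecidableEq V] (I : V → Type)
    [∀ γ, DecidableEq (I γ)] (b : ∀ γ, I γ)
    (𝒟 : Finset (Finset V)) : DecidableEq (TParam I b 𝒟) := by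
  unfold TParam; infer_instance

/-- The exponent `Σ_{F ∈ 𝒟, F ⊆ S(j)} θ(F, j_F)` of the hierarchical model. -/
noncomputable def energy {V : Type} [Fintype V] [DecidableEq V] {I : V → Type}
    [∀ γ, Fintype (I γ)] [∀ γ, DecidableEq (I γ)] (b : ∀ γ, I γ)
    (𝒟 : Finset (Finset V)) (θ : TParam I b 𝒟 → ℝ) (j : ∀ γ, I γ) : ℝ :=
  ∑ t : TParam I b 𝒟, if t.1.2 = cellOn b t.1.1 j then θ t else 0

/-- The partition function `Z(θ)`. -/
noncomputable def Zfun {V : Type} [Fintype V] [DecidableEq V] {I : V → Type}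
    [∀ γ, Fintype (I γ)] [∀ γ, DecidableEq (I γ)] (b : ∀ γ, I γ)
    (𝒟 : Finset (Finset V)) (θ : TParam I b 𝒟 → ℝ) : ℝ :=
  ∑ j : (∀ γ, I γ), Real.exp (energy b 𝒟 θ j)

/-- The log-partition function `k(θ) = log Z(θ)`. -/
noncomputable def kfun {V : Type} [Fintype V] [DecidableEq V] {I : V → Type}
    [∀ γ, Fintype (I γ)] [∀ γ, DecidableEq (I γ)] (b : ∀ γ, I γ)
    (𝒟 : Finset (Finset V)) (θ : TParam I b 𝒟 → ℝ) : ℝ :=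
  Real.log (Zfun b 𝒟 θ)

/-- The hierarchical log-linear probability function `p_θ`. -/
noncomputable def phier {V : Type} [Fintype V] [DecidableEq V] {I : V → Type}
    [∀ γ, Fintype (I γ)] [∀ γ, DecidableEq (I γ)] (b : ∀ γ, I γ)
    (𝒟 : Finset (Finset V)) (θ : TParam I b 𝒟 → ℝ) (j : ∀ γ, I γ) : ℝ :=
  Real.exp (energy b 𝒟 θ j) / Zfun b 𝒟 θ

/-!
Since `log p_θ(j) = Σ_{u ≤ j} θ(u) - k(θ)`, where `u` runs over the parameters `(F, j_F)` with
`F ⊆ S(j)`, and `p_θ(i*) = exp(-k(θ))`, both sides are exponentials of expressions linear in the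
log-probabilities. The faces of `(F, j_F) ∈ T` correspond to the nonempty subsets of `F`, because
`𝒟` is closed under nonempty subsets, so on the face poset of `T` the Möbius function is
`(-1)^{|F∖D|}`, and the induced hyperparameters are the Möbius transform of `s`. Hence
`Σ_t α(t) log p_θ(t)` recovers `Σ_t θ(t) s(t) - k(θ) Σ_t α(t)`; the missing empty face makes
`Σ_t α(t) = -Σ_t (-1)^{|D|} s(t)`, which is absorbed by `α_∅`.
-/

lemma Finset.sum_superset_neg_one_pow_card_sdiff {α R : Type*} [DecidableEq α] [Ring R]
    {G F : Finset α} (hGF : G ⊆ F) :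
    ∑ D ∈ F.powerset.filter (G ⊆ ·), (-1 : R) ^ #(F \ D) = if G = F then 1 else 0 := by
  have hcompl : ∑ D ∈ F.powerset.filter (G ⊆ ·), (-1 : R) ^ #(F \ D) =
      ∑ E ∈ (F \ G).powerset, (-1 : R) ^ #E := by
    refine sum_nbij' (F \ ·) (F \ ·) ?_ ?_ ?_ ?_ (fun _ _ => rfl)
    · intro D hD
      simpa using sdiff_subset_sdiff subset_rfl (mem_filter.mp hD).2
    · intro E hE
      have hE : E ⊆ F \ G := mem_powerset.mp hE
      exact mem_filter.mpr ⟨mem_powerset.mpr sdiff_subset,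
        fun γ hγ => mem_sdiff.mpr ⟨hGF hγ, fun hγE => (mem_sdiff.mp (hE hγE)).2 hγ⟩⟩
    · intro D hD
      exact sdiff_sdiff_eq_self (mem_powerset.mp (mem_filter.mp hD).1)
    · intro E hE
      exact sdiff_sdiff_eq_self ((mem_powerset.mp hE).trans sdiff_subset)
  have hpowerset : ∑ E ∈ (F \ G).powerset, (-1 : R) ^ #E = if F \ G = ∅ then 1 else 0 := by
    exact_mod_cast congrArg (Int.cast : ℤ → R) sum_powerset_neg_one_pow_card
  have hempty : F \ G = ∅ ↔ G = F := sdiff_eq_empty_iff_subset.trans ⟨hGF.antisymm, Eq.ge⟩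
  rw [hcompl, hpowerset]
  exact if_congr hempty rfl rfl

lemma sum_sum_filter_mul_sum_filter_of_inversion {α R : Type*} [Fintype α] [DecidableEq α]
    [CommSemiring R] (r : α → α → Prop) [DecidableRel r] (μ : α → α → R)
    (hμ : ∀ u t', ∑ t ∈ univ.filter (fun t => r u t ∧ r t t'), μ t t' = if u = t' then 1 else 0)
    (θ s : α → R) :
    ∑ t, (∑ u ∈ univ.filter (r · t), θ u) * (∑ t' ∈ univ.filter (r t ·), μ t t' * s t') =
      ∑ t, θ t * s t := by
  calc ∑ t, (∑ u ∈ univ.filter (r · t), θ u) * (∑ t' ∈ univ.filter (r t ·), μ t t' * s t')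
      = ∑ t, ∑ u, ∑ t', if r u t ∧ r t t' then θ u * (μ t t' * s t') else 0 := by
        simp only [sum_filter, sum_mul_sum, ite_mul, mul_ite, zero_mul, mul_zero, ← ite_and,
          and_comm]
    _ = ∑ u, ∑ t', (∑ t ∈ univ.filter (fun t => r u t ∧ r t t'), μ t t') * (θ u * s t') := by
        rw [sum_comm]
        refine sum_congr rfl fun u _ => ?_
        rw [sum_comm]
        refine sum_congr rfl fun t' _ => ?_
        rw [sum_filter, sum_mul]
        exact sum_congr rfl fun t _ => by split_ifs <;> ring
    _ = ∑ t, θ t * s t := by simp [hμ]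

section Cells

variable {V : Type} [DecidableEq V] {I : V → Type} {b : ∀ γ, I γ}

lemma cellOn_baseline (F : Finset V) : cellOn b F b = b := by
  funext γ; simp [cellOn]

variable [Fintype V] [∀ γ, DecidableEq (I γ)]

lemma cellSupport_baseline : cellSupport b b = ∅ := by
  simp [cellSupport]

lemma cellSupport_cellOn {D : Finset V} {j : ∀ γ, I γ} (hD : D ⊆ cellSupport b j) :
    cellSupport b (cellOn b D j) = D := by
  ext γ
  by_cases hγ : γ ∈ D
  · simpa [cellOn, hγ, cellSupport] using hD hγ
  · simp [cellOn, hγ, cellSupport]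

end Cells

namespace TParam

variable {V : Type} [Fintype V] [DecidableEq V] {I : V → Type} [∀ γ, DecidableEq (I γ)]
  {b : ∀ γ, I γ} {𝒟 : Finset (Finset V)}

lemma mem_support_iff (t : TParam I b 𝒟) {γ : V} : γ ∈ t.1.1 ↔ t.1.2 γ ≠ b γ := by
  conv_lhs => rw [← t.2.2]
  simp [cellSupport]

lemma apply_eq_of_notMem (t : TParam I b 𝒟) {γ : V} (hγ : γ ∉ t.1.1) : t.1.2 γ = b γ :=
  not_not.mp (mt t.mem_support_iff.mpr hγ)

lemma cellOn_self (t : TParam I b 𝒟) : cellOn b t.1.1 t.1.2 = t.1.2 := by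
  funext γ
  by_cases hγ : γ ∈ t.1.1
  · simp [cellOn, hγ]
  · simp [cellOn, hγ, t.apply_eq_of_notMem hγ]

/-- `u` is a face of `t`: `u = (D, (j_F)_D)` for `t = (F, j_F)` and some `D ⊆ F`. -/
def IsFace (u t : TParam I b 𝒟) : Prop :=
  u.1.1 ⊆ t.1.1 ∧ ∀ γ ∈ u.1.1, t.1.2 γ = u.1.2 γ

instance : DecidableRel (IsFace (I := I) (b := b) (𝒟 := 𝒟)) :=
  fun _ _ => inferInstanceAs (Decidable (_ ∧ _))

lemma isFace_iff_eq_cellOn {u t : TParam I b 𝒟} : u.IsFace t ↔ u.1.2 = cellOn b u.1.1 t.1.2 := by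
  constructor
  · rintro ⟨-, hagree⟩
    funext γ
    by_cases hγ : γ ∈ u.1.1
    · simp [cellOn, hγ, hagree γ hγ]
    · simp [cellOn, hγ, u.apply_eq_of_notMem hγ]
  · intro h
    have hagree : ∀ γ ∈ u.1.1, t.1.2 γ = u.1.2 γ := fun γ hγ => by simp [h, cellOn, hγ]
    refine ⟨fun γ hγ => ?_, hagree⟩
    rw [mem_support_iff, hagree γ hγ]
    exact u.mem_support_iff.mp hγ

lemma IsFace.refl (t : TParam I b 𝒟) : t.IsFace t :=
  ⟨subset_rfl, fun _ _ => rfl⟩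

lemma IsFace.trans {u v t : TParam I b 𝒟} (huv : u.IsFace v) (hvt : v.IsFace t) : u.IsFace t :=
  ⟨huv.1.trans hvt.1, fun γ hγ => (hvt.2 γ (huv.1 hγ)).trans (huv.2 γ hγ)⟩

lemma IsFace.eq_of_support_eq {u t : TParam I b 𝒟} (h : u.IsFace t) (hsupp : u.1.1 = t.1.1) :
    u = t := by
  refine Subtype.ext (Prod.ext hsupp ?_)
  rw [isFace_iff_eq_cellOn.mp h, hsupp, cellOn_self]

lemma IsFace.of_support_subset {u v t : TParam I b 𝒟} (hu : u.IsFace t) (hv : v.IsFace t)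
    (huv : u.1.1 ⊆ v.1.1) : u.IsFace v :=
  ⟨huv, fun γ hγ => (hv.2 γ (huv hγ)).symm.trans (hu.2 γ hγ)⟩

variable [∀ γ, Fintype (I γ)]

lemma sum_isFace_eq_sum_powerset {R : Type*} [AddCommMonoid R] (t : TParam I b 𝒟)
    (f : Finset V → R) :
    ∑ u ∈ univ.filter (IsFace · t), f u.1.1 = ∑ D ∈ t.1.1.powerset.filter (· ∈ 𝒟), f D := by
  refine Finset.sum_nbij (fun u => u.1.1) ?_ ?_ ?_ (fun _ _ => rfl)
  · intro u hu
    simpa using And.intro (mem_filter.mp hu).2.1 u.2.1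
  · intro u hu v hv hsupp
    have hu : u.IsFace t := (mem_filter.mp hu).2
    have hv : v.IsFace t := (mem_filter.mp hv).2
    exact (hu.of_support_subset hv hsupp.le).eq_of_support_eq hsupp
  · intro D hD
    obtain ⟨hDt, hD𝒟⟩ : D ⊆ t.1.1 ∧ D ∈ 𝒟 := by simpa using hD
    have hsupp : cellSupport b (cellOn b D t.1.2) = D := cellSupport_cellOn (t.2.2 ▸ hDt)
    exact ⟨⟨(D, cellOn b D t.1.2), hD𝒟, hsupp⟩,
      mem_coe.mpr (mem_filter.mpr ⟨mem_univ _, isFace_iff_eq_cellOn.mpr rfl⟩), rfl⟩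

end TParam

open TParam

lemma energy_eq_sum_isFace {V : Type} [Fintype V] [DecidableEq V] {I : V → Type}
    [∀ γ, Fintype (I γ)] [∀ γ, DecidableEq (I γ)] {b : ∀ γ, I γ} {𝒟 : Finset (Finset V)}
    (θ : TParam I b 𝒟 → ℝ) (t : TParam I b 𝒟) :
    energy b 𝒟 θ t.1.2 = ∑ u ∈ univ.filter (IsFace · t), θ u := by
  rw [sum_filter, energy]
  exact sum_congr rfl fun u _ => if_congr isFace_iff_eq_cellOn.symm rfl rfl

lemma energy_baseline {V : Type} [Fintype V] [DecidableEq V] {I : V → Type}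
    [∀ γ, Fintype (I γ)] [∀ γ, DecidableEq (I γ)] {b : ∀ γ, I γ} {𝒟 : Finset (Finset V)}
    (h𝒟 : ∀ D ∈ 𝒟, D ≠ ∅) (θ : TParam I b 𝒟 → ℝ) : energy b 𝒟 θ b = 0 := by
  refine sum_eq_zero fun t _ => if_neg fun h => h𝒟 t.1.1 t.2.1 ?_
  rw [← t.2.2, h, cellOn_baseline, cellSupport_baseline]

lemma IsGenClass.powerset_filter_mem {V : Type} [DecidableEq V] {𝒟 : Finset (Finset V)}
    (h𝒟 : IsGenClass 𝒟) {F : Finset V} (hF : F ∈ 𝒟) :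
    F.powerset.filter (· ∈ 𝒟) = F.powerset.erase ∅ := by
  ext D
  simp only [mem_filter, mem_powerset, mem_erase]
  exact ⟨fun h => ⟨h𝒟.2.1 D h.2, h.1⟩, fun h => ⟨h.2, h𝒟.2.2 F hF D h.2 h.1⟩⟩

section Faces

variable {V : Type} [Fintype V] [DecidableEq V] {I : V → Type} [∀ γ, Fintype (I γ)]
  [∀ γ, DecidableEq (I γ)] {b : ∀ γ, I γ} {𝒟 : Finset (Finset V)}

lemma sum_isFace_neg_one_pow (h𝒟 : IsGenClass 𝒟) (t : TParam I b 𝒟) :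
    ∑ u ∈ univ.filter (IsFace · t), (-1 : ℝ) ^ #(t.1.1 \ u.1.1) = -(-1) ^ #t.1.1 := by
  have hall : t.1.1.powerset.filter (∅ ⊆ ·) = t.1.1.powerset :=
    filter_true_of_mem fun _ _ => empty_subset _
  have hsum := sum_superset_neg_one_pow_card_sdiff (R := ℝ) (empty_subset t.1.1)
  rw [hall, ← sum_erase_add _ _ (empty_mem_powerset _), sdiff_empty,
    if_neg (h𝒟.2.1 _ t.2.1).symm] at hsum
  rw [sum_isFace_eq_sum_powerset t (fun D => (-1 : ℝ) ^ #(t.1.1 \ D)),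
    h𝒟.powerset_filter_mem t.2.1]
  linarith

lemma sum_isFace_between (h𝒟 : IsGenClass 𝒟) (u t : TParam I b 𝒟) :
    ∑ v ∈ univ.filter (fun v => u.IsFace v ∧ v.IsFace t), (-1 : ℝ) ^ #(t.1.1 \ v.1.1) =
      if u = t then 1 else 0 := by
  by_cases hut : u.IsFace t
  · have hfilter : univ.filter (fun v => u.IsFace v ∧ v.IsFace t) =
        (univ.filter (IsFace · t)).filter (fun v => u.1.1 ⊆ v.1.1) := by
      ext v
      simp only [mem_filter, mem_univ, true_and]
      exact ⟨fun h => ⟨h.2, h.1.1⟩, fun h => ⟨hut.of_support_subset h.1 h.2, h.1⟩⟩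
    have hsubsets : (t.1.1.powerset.filter (· ∈ 𝒟)).filter (u.1.1 ⊆ ·) =
        t.1.1.powerset.filter (u.1.1 ⊆ ·) := by
      ext D
      simp only [mem_filter, mem_powerset]
      refine ⟨fun h => ⟨h.1.1, h.2⟩, ?_⟩
      rintro ⟨hDt, huD⟩
      refine ⟨⟨hDt, h𝒟.2.2 _ t.2.1 D hDt fun hD => ?_⟩, huD⟩
      exact h𝒟.2.1 _ u.2.1 (subset_empty.mp (hD ▸ huD))
    rw [hfilter, sum_filter,
      sum_isFace_eq_sum_powerset t (fun D => if u.1.1 ⊆ D then (-1 : ℝ) ^ #(t.1.1 \ D) else 0),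
      ← sum_filter, hsubsets, sum_superset_neg_one_pow_card_sdiff hut.1]
    exact if_congr ⟨hut.eq_of_support_eq, fun h => h ▸ rfl⟩ rfl rfl
  · rw [filter_false_of_mem fun v _ h => hut (h.1.trans h.2), sum_empty,
      if_neg fun (h : u = t) => hut (h ▸ IsFace.refl u)]

end Faces

section Hyperparameters

variable {V : Type} [Fintype V] [DecidableEq V] {I : V → Type} [∀ γ, Fintype (I γ)]
  [∀ γ, DecidableEq (I γ)] {b : ∀ γ, I γ} {𝒟 : Finset (Finset V)}

/-- The induced hyperparameter `α(D, i_D)`. -/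
noncomputable def inducedHyperparam (s : TParam I b 𝒟 → ℝ) (t : TParam I b 𝒟) : ℝ :=
  ∑ t' ∈ univ.filter (IsFace t ·), (-1 : ℝ) ^ #(t'.1.1 \ t.1.1) * s t'

lemma sum_energy_mul_inducedHyperparam (h𝒟 : IsGenClass 𝒟) (θ s : TParam I b 𝒟 → ℝ) :
    ∑ t, energy b 𝒟 θ t.1.2 * inducedHyperparam s t = ∑ t, θ t * s t := by
  simp only [energy_eq_sum_isFace, inducedHyperparam]
  exact sum_sum_filter_mul_sum_filter_of_inversion IsFace (fun t t' => (-1) ^ #(t'.1.1 \ t.1.1))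
    (sum_isFace_between h𝒟) θ s

lemma sum_inducedHyperparam (h𝒟 : IsGenClass 𝒟) (s : TParam I b 𝒟 → ℝ) :
    ∑ t, inducedHyperparam s t = -∑ t, (-1 : ℝ) ^ #t.1.1 * s t := by
  simp only [inducedHyperparam]
  rw [sum_comm' (t' := univ) (s' := fun t' => univ.filter (IsFace · t')) (by simp)]
  simp only [← sum_mul, sum_isFace_neg_one_pow h𝒟, neg_mul, sum_neg_distrib]

lemma Zfun_pos (θ : TParam I b 𝒟 → ℝ) : 0 < Zfun b 𝒟 θ :=
  sum_pos (fun _ _ => Real.exp_pos _) ⟨b, mem_univ b⟩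

lemma phier_rpow (θ : TParam I b 𝒟 → ℝ) (j : ∀ γ, I γ) (a : ℝ) :
    phier b 𝒟 θ j ^ a = Real.exp ((energy b 𝒟 θ j - kfun b 𝒟 θ) * a) := by
  rw [Real.exp_mul, Real.exp_sub, kfun, Real.exp_log (Zfun_pos θ), phier]

end Hyperparameters

/-- The conjugate-prior kernel rewritten in terms of cell probabilities:
`exp(Σ_t θ(t) s(t)) · p_θ(i*)^α = (∏_{(D,i_D)∈T} p_θ(i(D))^{α(D,i_D)}) · p_θ(i*)^{α_∅}`,
where `α(D,i_D) = Σ_{F∈𝒟,F⊇D} Σ_{j_F∈I_F*:(j_F)_D=i_D} (−1)^{|F∖D|} s(F,j_F)` and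
`α_∅ = α + Σ_{(D,i_D)∈T} (−1)^{|D|} s(D,i_D)`. -/
theorem prior_kernel_in_cellProbs {V : Type} [Fintype V] [DecidableEq V]
    {I : V → Type} [∀ γ, Fintype (I γ)] [∀ γ, DecidableEq (I γ)]
    (b : ∀ γ, I γ) (𝒟 : Finset (Finset V)) (h𝒟 : IsGenClass 𝒟)
    (θ s : TParam I b 𝒟 → ℝ) (α : ℝ) :
    Real.exp (∑ t : TParam I b 𝒟, θ t * s t) * phier b 𝒟 θ b ^ α =
      (∏ t : TParam I b 𝒟,
        phier b 𝒟 θ t.1.2 ^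
          (∑ t' ∈ Finset.univ.filter
              (fun t' : TParam I b 𝒟 =>
                t.1.1 ⊆ t'.1.1 ∧ ∀ γ ∈ t.1.1, t'.1.2 γ = t.1.2 γ),
            (-1 : ℝ) ^ (t'.1.1 \ t.1.1).card * s t')) *
      phier b 𝒟 θ b ^ (α + ∑ t : TParam I b 𝒟, (-1 : ℝ) ^ t.1.1.card * s t) := by
  change _ = (∏ t, phier b 𝒟 θ t.1.2 ^ inducedHyperparam s t) * _
  simp only [phier_rpow, ← Real.exp_sum, ← Real.exp_add]
  congr 1
  rw [energy_baseline h𝒟.2.1]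
  simp only [sub_mul, sum_sub_distrib, ← mul_sum, sum_energy_mul_inducedHyperparam h𝒟,
    sum_inducedHyperparam h𝒟]
  ring
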